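/- For every real number r ≥ 0, with d₁(r) = (8+r)/(6+r) and d₂(r) = (3+r)/(4+r), the smoothing factor with damping parameter ω = 1 satisfies max(|1 − d₁(r)|, |1 − d₂(r)|) = 2/(6+r) ≤ 1/3, with equality 1/3 at r = 0. -/

import Mathlib

noncomputable def d₁ (r : ℝ) : ℝ := (8 + r) / (6 + r)
noncomputable def d₂ (r : ℝ) : ℝ := (3 + r) / (4 + r)

lemma one_sub_d₁ {r : ℝ} (h : 6 + r ≠ 0) : 1 - d₁ r = -(2 / (6 + r)) := by
  unfold d₁
  field_simp
  ring

lemma one_sub_d₂ {r : ℝ} (h : 4 + r ≠ 0) : 1 - d₂ r = 1 / (4 + r) := by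
  unfold d₂
  field_simp
  ring

lemma max_abs_one_sub_d₁_d₂ {r : ℝ} (hr : -2 ≤ r) :
    max |1 - d₁ r| |1 - d₂ r| = 2 / (6 + r) := by
  have h6 : 0 < 6 + r := by linarith
  have h4 : 0 < 4 + r := by linarith
  rw [one_sub_d₁ h6.ne', one_sub_d₂ h4.ne', abs_neg, abs_of_pos (by positivity),
    abs_of_pos (by positivity), max_eq_left]
  rw [div_le_div_iff₀ h4 h6]
  linarith

lemma two_div_six_add_le_one_third {r : ℝ} (hr : 0 ≤ r) : 2 / (6 + r) ≤ 1 / 3 := by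
  rw [div_le_div_iff₀ (by linarith) three_pos]
  linarith

theorem smoothing_factor_omega_one :
    (∀ r : ℝ, 0 ≤ r →
      max |1 - d₁ r| |1 - d₂ r| = 2 / (6 + r) ∧ 2 / (6 + r) ≤ 1/3) ∧
    max |1 - d₁ 0| |1 - d₂ 0| = 1/3 := by
  refine ⟨fun r hr => ⟨max_abs_one_sub_d₁_d₂ (by linarith), two_div_six_add_le_one_third hr⟩, ?_⟩
  rw [max_abs_one_sub_d₁_d₂ (by norm_num)]
  norm_num
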